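/- Let n ≥ 2. Let ν₁, …, ν_n ∈ 𝒞 be at most finite with ν₁[0] = 1 and complex modulus |ν_j[0]| < 1 for j = 2, …, n. For j = 2, …, n let r_j ∈ 𝒞 satisfy r_j·ν₁ = ν_j, and let w₁, w₂, …, w_n ∈ 𝒞ⁿ be vectors with at most finite entries such that w₁^i[0] ≠ 0 for at least one coordinate i. Set ξ_k := Σ_{j=2}^{n} r_j^k·w_j ∈ 𝒞ⁿ. Suppose s_k ∈ ℛ satisfy s_k ⪰ 0 and s_k² = Σ_{i=1}^{n} conj((w₁+ξ_k)^i)·(w₁+ξ_k)^i for all k, and s ∈ ℛ satisfies s ⪰ 0 and s² = Σ_{i=1}^{n} conj(w₁^i)·w₁^i, and suppose t_k, t ∈ ℛ satisfy s_k·t_k = 1 for all k and s·t = 1. Then t_k →wk t (i.e. 1/‖w₁+ξ_k‖₂ →wk 1/‖w₁‖₂). -/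

import Mathlib

open Pointwise

noncomputable section

/-- A set of rational numbers is *left-finite* if below every rational number
it has only finitely many elements. -/
def LeftFinite (A : Set ℚ) : Prop := ∀ r : ℚ, {q ∈ A | q < r}.Finite

theorem LeftFinite.mono {A B : Set ℚ} (h : LeftFinite B) (hAB : A ⊆ B) : LeftFinite A :=
  fun r => (h r).subset fun _ hq => ⟨hAB hq.1, hq.2⟩

theorem LeftFinite.union {A B : Set ℚ} (hA : LeftFinite A) (hB : LeftFinite B) :
    LeftFinite (A ∪ B) := by
  intro r
  have hsub : {q ∈ A ∪ B | q < r} ⊆ {q ∈ A | q < r} ∪ {q ∈ B | q < r} := by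
    rintro q ⟨hq | hq, hr⟩
    · exact Or.inl ⟨hq, hr⟩
    · exact Or.inr ⟨hq, hr⟩
  exact ((hA r).union (hB r)).subset hsub

theorem Set.Finite.leftFinite {A : Set ℚ} (h : A.Finite) : LeftFinite A :=
  fun _ => h.subset fun _ hq => hq.1

theorem LeftFinite.exists_lb {A : Set ℚ} (h : LeftFinite A) : ∃ m : ℚ, ∀ a ∈ A, m ≤ a := by
  rcases A.eq_empty_or_nonempty with rfl | ⟨a₀, ha₀⟩
  · exact ⟨0, by simp⟩
  · obtain ⟨m, hm⟩ := (h a₀).bddBelow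
    refine ⟨min m a₀, fun a ha => ?_⟩
    rcases lt_or_ge a a₀ with hlt | hle
    · exact le_trans (min_le_left _ _) (hm ⟨ha, hlt⟩)
    · exact le_trans (min_le_right _ _) hle

theorem LeftFinite.addSet {A B : Set ℚ} (hA : LeftFinite A) (hB : LeftFinite B) :
    LeftFinite (A + B) := by
  obtain ⟨mA, hmA⟩ := hA.exists_lb
  obtain ⟨mB, hmB⟩ := hB.exists_lb
  intro r
  apply Set.Finite.subset (((hA (r - mB)).prod (hB (r - mA))).image fun p : ℚ × ℚ => p.1 + p.2)
  rintro q ⟨hq, hqr⟩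
  rw [Set.mem_add] at hq
  obtain ⟨a, ha, b, hb, rfl⟩ := hq
  exact ⟨(a, b), ⟨⟨ha, by linarith [hmB b hb]⟩, hb, by linarith [hmA a ha]⟩, rfl⟩

/-- The Levi-Civita field over a coefficient ring `K`, realized as the subring of
Hahn series over `ℚ` consisting of those series with left-finite support.
(An element is a function `ℚ → K` with left-finite support; addition is pointwise
and multiplication is convolution.) -/
def LeviCivitaField (K : Type) [CommRing K] : Subring (HahnSeries ℚ K) where
  carrier := {x | LeftFinite x.support}
  zero_mem' := by
    have h : (0 : HahnSeries ℚ K).support = (∅ : Set ℚ) := HahnSeries.support_zero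
    exact Set.Finite.leftFinite (by rw [h]; exact Set.finite_empty)
  one_mem' := by
    refine Set.Finite.leftFinite ((Set.finite_singleton (0 : ℚ)).subset ?_)
    intro q hq
    by_contra hq0
    have hq0' : q ≠ 0 := by simpa using hq0
    have : (1 : HahnSeries ℚ K).coeff q = 0 := by
      rw [HahnSeries.coeff_one, if_neg hq0']
    exact hq this
  add_mem' := fun {x y} hx hy =>
    LeftFinite.mono (LeftFinite.union hx hy) (HahnSeries.support_add_subset x y)
  neg_mem' := fun {x} hx => LeftFinite.mono hx (le_of_eq HahnSeries.support_neg)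
  mul_mem' := fun {x y} hx hy =>
    LeftFinite.mono (LeftFinite.addSet hx hy) HahnSeries.support_mul_subset

namespace LeviCivitaField

variable {K : Type} [CommRing K]

/-- The coefficient `a[q]` of an element of the Levi-Civita field. -/
def coeff (x : LeviCivitaField K) (q : ℚ) : K := (x : HahnSeries ℚ K).coeff q

/-- The support `supp a` of an element of the Levi-Civita field. -/
def supp (x : LeviCivitaField K) : Set ℚ := (x : HahnSeries ℚ K).support

theorem leftFinite_supp (x : LeviCivitaField K) : LeftFinite (supp x) := x.2

/-- `λ(a)`: the minimum of the support of `a` (for nonzero `a`; `0` for `a = 0`). -/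
def lam (x : LeviCivitaField K) : ℚ := (x : HahnSeries ℚ K).order

/-- `a` is at most finite if `a[q] = 0` for all `q < 0`. -/
def AtMostFinite (x : LeviCivitaField K) : Prop := ∀ q : ℚ, q < 0 → coeff x q = 0

/-- A sequence is regular if the union of the supports of its elements is left-finite. -/
def Regular (a : ℕ → LeviCivitaField K) : Prop := LeftFinite (⋃ n, supp (a n))

/-- The seminorm `‖a‖_r = max {|a[q]| : q ≤ r, a[q] ≠ 0}` (equal to `0` if no such `q` exists). -/
def wnorm [Norm K] (x : LeviCivitaField K) (r : ℝ) : ℝ :=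
  sSup ((fun q : ℚ => ‖coeff x q‖) '' {q : ℚ | (q : ℝ) ≤ r ∧ coeff x q ≠ 0})

/-- Weak convergence: `a_n →wk l` iff for every real `r > 0` there is `N` with
`‖a_n − l‖_{1/r} < r` for all `n > N`. -/
def WeakTendsto [Norm K] (a : ℕ → LeviCivitaField K) (l : LeviCivitaField K) : Prop :=
  ∀ r : ℝ, 0 < r → ∃ N : ℕ, ∀ n : ℕ, n > N → wnorm (a n - l) (1 / r) < r

/-- Positivity on the real Levi-Civita field: `x ≻ 0` iff `x ≠ 0` and `x[λ(x)] > 0`. -/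
def Pos (x : LeviCivitaField ℝ) : Prop := x ≠ 0 ∧ 0 < coeff x (lam x)

/-- `x ⪰ 0` on the real Levi-Civita field. -/
def Nonneg (x : LeviCivitaField ℝ) : Prop := x = 0 ∨ Pos x

/-- `x ⪯ y` on the real Levi-Civita field. -/
def Le (x y : LeviCivitaField ℝ) : Prop := Nonneg (y - x)

/-- An element of the complex Levi-Civita field is *real* if all its coefficients are real;
this identifies `ℛ` with the subring `{z ∈ 𝒞 : z[q] ∈ ℝ for all q}` of `𝒞`. -/
def IsReal (x : LeviCivitaField ℂ) : Prop := ∀ q : ℚ, (coeff x q).im = 0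

/-- `x ≻ 0` for elements of `ℛ` viewed inside `𝒞`: `x` is real, nonzero,
and its leading coefficient is positive. -/
def PosC (x : LeviCivitaField ℂ) : Prop := IsReal x ∧ x ≠ 0 ∧ 0 < (coeff x (lam x)).re

/-- `x ⪰ 0` for elements of `ℛ` viewed inside `𝒞`. -/
def NonnegC (x : LeviCivitaField ℂ) : Prop := x = 0 ∨ PosC x

/-- `x ⪯ y` for elements of `ℛ` viewed inside `𝒞`. -/
def LeC (x y : LeviCivitaField ℂ) : Prop := NonnegC (y - x)

/-- `x ≺ y` for elements of `ℛ` viewed inside `𝒞`. -/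
def LtC (x y : LeviCivitaField ℂ) : Prop := PosC (y - x)

/-- Conjugation on the complex Levi-Civita field: `conj(z)[q] = conj (z[q])`. -/
def conj (x : LeviCivitaField ℂ) : LeviCivitaField ℂ :=
  ⟨⟨fun q => starRingEnd ℂ (coeff x q),
    (x : HahnSeries ℚ ℂ).isPWO_support.mono (fun q hq => by
      simp only [Function.mem_support, ne_eq, map_eq_zero] at hq
      exact hq)⟩,
   LeftFinite.mono x.2 (fun q hq => by
      have hq' : starRingEnd ℂ (coeff x q) ≠ 0 := hq
      have : coeff x q ≠ 0 := fun h => hq' (by rw [h, map_zero])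
      exact this)⟩

/-- The monomial `d^q`: the element supported at `{q}` with value `1`. -/
def dpow (q : ℚ) : LeviCivitaField ℂ :=
  ⟨HahnSeries.single q (1 : ℂ),
    Set.Finite.leftFinite ((Set.finite_singleton q).subset HahnSeries.support_single_subset)⟩

end LeviCivitaField


namespace LCAux

open Filter Finset HahnSeries

variable {G : Set ℚ}

/-- Hypotheses on the ambient support monoid. -/
structure Good (G : Set ℚ) : Prop where
  zero : (0:ℚ) ∈ G
  add : ∀ a ∈ G, ∀ b ∈ G, a + b ∈ G
  pos : ∀ a ∈ G, 0 ≤ a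
  fin : LeftFinite G

/-- The finite set `{p ∈ G | p < q + 1}`. -/
def Fq (hG : Good G) (q : ℚ) : Finset ℚ := (hG.fin (q+1)).toFinset

theorem mem_Fq (hG : Good G) {q p : ℚ} : p ∈ Fq hG q ↔ p ∈ G ∧ p < q + 1 := by
  simp [Fq, Set.Finite.mem_toFinset]

theorem coeff_eq_zero_of_neg (hG : Good G) {x : HahnSeries ℚ ℂ} (hx : x.support ⊆ G) {q : ℚ}
    (hq : q < 0) : x.coeff q = 0 := by
  by_contra h
  exact absurd (hG.pos q (hx h)) (not_le.2 hq)

theorem mul_coeff_eqF (hG : Good G) {x y : HahnSeries ℚ ℂ} (hx : x.support ⊆ G) (hy : y.support ⊆ G)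
    (q : ℚ) : (x * y).coeff q = ∑ p ∈ Fq hG q, x.coeff p * y.coeff (q - p) := by
  rw [HahnSeries.coeff_mul]
  have hinj : ∀ ij ∈ Finset.antidiagonal x.isPWO_support y.isPWO_support q,
      ∀ ij' ∈ Finset.antidiagonal x.isPWO_support y.isPWO_support q,
      ij.1 = ij'.1 → ij = ij' := by
    rintro ⟨i, j⟩ hij ⟨i', j'⟩ hij' (h : i = i')
    rw [Finset.mem_antidiagonal] at hij hij'
    subst h
    have : j = j' := by linarith [hij.2.2, hij'.2.2]
    simp [this]
  have h1 : ∑ ij ∈ Finset.antidiagonal x.isPWO_support y.isPWO_support q,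
      x.coeff ij.1 * y.coeff ij.2
      = ∑ p ∈ (Finset.antidiagonal x.isPWO_support y.isPWO_support q).image Prod.fst,
        x.coeff p * y.coeff (q - p) := by
    rw [Finset.sum_image hinj]
    apply Finset.sum_congr rfl
    intro ij hij
    rw [Finset.mem_antidiagonal] at hij
    have : ij.2 = q - ij.1 := by linarith [hij.2.2]
    rw [this]
  rw [h1]
  apply Finset.sum_subset
  · intro p hp
    simp only [Finset.mem_image] at hp
    obtain ⟨ij, hij, rfl⟩ := hp
    rw [Finset.mem_antidiagonal] at hij
    have h2 : ij.2 = q - ij.1 := by linarith [hij.2.2]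
    have hpG : ij.1 ∈ G := hx hij.1
    have : (0:ℚ) ≤ ij.2 := hG.pos _ (hy hij.2.1)
    rw [mem_Fq]
    exact ⟨hpG, by linarith⟩
  · intro p _ hp
    by_contra h0
    have hxp : x.coeff p ≠ 0 := fun h => h0 (by rw [h, zero_mul])
    have hyp : y.coeff (q - p) ≠ 0 := fun h => h0 (by rw [h, mul_zero])
    apply hp
    rw [Finset.mem_image]
    refine ⟨(p, q - p), ?_, rfl⟩
    rw [Finset.mem_antidiagonal]
    exact ⟨hxp, hyp, by ring⟩

theorem mul_coeff_zero' {x y : HahnSeries ℚ ℂ} (hx : ∀ p ∈ x.support, (0:ℚ) ≤ p)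
    (hy : ∀ p ∈ y.support, (0:ℚ) ≤ p) :
    (x * y).coeff 0 = x.coeff 0 * y.coeff 0 := by
  rw [HahnSeries.coeff_mul]
  have hsub : Finset.antidiagonal x.isPWO_support y.isPWO_support 0 ⊆ {((0:ℚ), (0:ℚ))} := by
    rintro ⟨i, j⟩ hij
    rw [Finset.mem_antidiagonal] at hij
    have hi := hx _ hij.1
    have hj := hy _ hij.2.1
    have : i = 0 ∧ j = 0 := by constructor <;> linarith [hij.2.2]
    simp [this.1, this.2]
  rw [Finset.sum_subset hsub]
  · simp
  · rintro ⟨i, j⟩ hij hij2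
    simp only [Finset.mem_singleton, Prod.mk.injEq] at hij
    obtain ⟨rfl, rfl⟩ := hij
    rw [Finset.mem_antidiagonal] at hij2
    simp only [Function.mem_support, add_zero, and_true, not_and] at hij2
    by_cases hx0 : x.coeff 0 = 0
    · rw [hx0, zero_mul]
    · rw [not_not.1 (hij2 hx0), mul_zero]

theorem supp_mul_subset (hG : Good G) {x y : HahnSeries ℚ ℂ} (hx : x.support ⊆ G)
    (hy : y.support ⊆ G) : (x * y).support ⊆ G := by
  intro q hq
  obtain ⟨i, hi, j, hj, rfl⟩ := support_mul_subset hq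
  exact hG.add i (hx hi) j (hy hj)

theorem supp_one_subset (hG : Good G) : (1 : HahnSeries ℚ ℂ).support ⊆ G := by
  intro q hq
  rcases support_single_subset hq with rfl
  exact hG.zero

theorem supp_pow_subset (hG : Good G) {x : HahnSeries ℚ ℂ} (hx : x.support ⊆ G) (k : ℕ) :
    (x ^ k).support ⊆ G := by
  induction k with
  | zero => simpa using supp_one_subset hG
  | succ m ih => rw [pow_succ]; exact supp_mul_subset hG ih hx

theorem supp_sub_subset {x y : HahnSeries ℚ ℂ} (hx : x.support ⊆ G) (hy : y.support ⊆ G) :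
    (x - y).support ⊆ G := by
  intro q hq
  have : (x - y).coeff q ≠ 0 := hq
  rw [coeff_sub] at this
  by_cases h : x.coeff q = 0
  · exact hy (by simpa [h] using this)
  · exact hx h

/-- If `x * y = z`, `supp x ⊆ G`, `supp z ⊆ G` and `x[0] ≠ 0`, then `supp y ⊆ G`. -/
theorem support_of_mul_eq (hG : Good G) {x y z : HahnSeries ℚ ℂ} (hxy : x * y = z)
    (hx : x.support ⊆ G) (hz : z.support ⊆ G) (hx0 : x.coeff 0 ≠ 0) :
    y.support ⊆ G := by
  by_contra hbad
  rw [Set.not_subset] at hbad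
  obtain ⟨q0, hq0y, hq0G⟩ := hbad
  set Bad : Set ℚ := {p | p ∈ y.support ∧ p ∉ G} with hBadDef
  have hBadWF : Bad.IsWF := y.isWF_support.subset fun p hp => hp.1
  have hBadNe : Bad.Nonempty := ⟨q0, hq0y, hq0G⟩
  set q := hBadWF.min hBadNe with hq
  have hqBad : q ∈ Bad := hBadWF.min_mem hBadNe
  have hmin : ∀ p ∈ y.support, p < q → p ∈ G := by
    intro p hp hpq
    by_contra hpG
    exact absurd hpq (not_lt.2 (hBadWF.min_le hBadNe ⟨hp, hpG⟩))
  have hA : Finset.antidiagonal x.isPWO_support y.isPWO_support q = {((0:ℚ), q)} := by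
    apply Finset.Subset.antisymm
    · rintro ⟨i, j⟩ hij
      rw [Finset.mem_antidiagonal] at hij
      have hiG : i ∈ G := hx hij.1
      have hi0 : (0:ℚ) ≤ i := hG.pos _ hiG
      rcases eq_or_lt_of_le hi0 with h0 | h0
      · simp only [Finset.mem_singleton, Prod.mk.injEq]
        exact ⟨h0.symm, by linarith [hij.2.2]⟩
      · exfalso
        have hjq : j < q := by linarith [hij.2.2]
        have hjG : j ∈ G := hmin _ hij.2.1 hjq
        exact hqBad.2 (by rw [← hij.2.2]; exact hG.add i hiG j hjG)
    · intro ij hij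
      rw [Finset.mem_singleton] at hij
      subst hij
      rw [Finset.mem_antidiagonal]
      exact ⟨hx0, hqBad.1, zero_add q⟩
  have : z.coeff q = x.coeff 0 * y.coeff q := by
    rw [← hxy, HahnSeries.coeff_mul, hA, Finset.sum_singleton]
  exact hqBad.2 (hz (by rw [HahnSeries.mem_support, this]; exact mul_ne_zero hx0 hqBad.1))

/-- If `x * x = z`, `supp z ⊆ G`, `x[0] ≠ 0` and `supp x` is nonnegative, then `supp x ⊆ G`. -/
theorem support_of_sq (hG : Good G) {x z : HahnSeries ℚ ℂ} (hxx : x * x = z)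
    (hz : z.support ⊆ G) (hx0 : x.coeff 0 ≠ 0) (hxpos : ∀ p ∈ x.support, (0:ℚ) ≤ p) :
    x.support ⊆ G := by
  by_contra hbad
  rw [Set.not_subset] at hbad
  obtain ⟨q0, hq0y, hq0G⟩ := hbad
  set Bad : Set ℚ := {p | p ∈ x.support ∧ p ∉ G} with hBadDef
  have hBadWF : Bad.IsWF := x.isWF_support.subset fun p hp => hp.1
  have hBadNe : Bad.Nonempty := ⟨q0, hq0y, hq0G⟩
  set q := hBadWF.min hBadNe with hq
  have hqBad : q ∈ Bad := hBadWF.min_mem hBadNe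
  have hmin : ∀ p ∈ x.support, p < q → p ∈ G := by
    intro p hp hpq
    by_contra hpG
    exact absurd hpq (not_lt.2 (hBadWF.min_le hBadNe ⟨hp, hpG⟩))
  have hqne : q ≠ 0 := fun h => hqBad.2 (h ▸ hG.zero)
  have hA : Finset.antidiagonal x.isPWO_support x.isPWO_support q
      = {((0:ℚ), q), (q, (0:ℚ))} := by
    apply Finset.Subset.antisymm
    · rintro ⟨i, j⟩ hij
      rw [Finset.mem_antidiagonal] at hij
      have hi0 : (0:ℚ) ≤ i := hxpos _ hij.1
      have hj0 : (0:ℚ) ≤ j := hxpos _ hij.2.1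
      rcases eq_or_lt_of_le hi0 with h0 | h0
      · simp only [Finset.mem_insert, Finset.mem_singleton, Prod.mk.injEq]
        exact Or.inl ⟨h0.symm, by linarith [hij.2.2]⟩
      · rcases eq_or_lt_of_le hj0 with h1 | h1
        · simp only [Finset.mem_insert, Finset.mem_singleton, Prod.mk.injEq]
          exact Or.inr ⟨by linarith [hij.2.2], h1.symm⟩
        · exfalso
          have hiq : i < q := by linarith [hij.2.2]
          have hjq : j < q := by linarith [hij.2.2]
          exact hqBad.2 (hij.2.2 ▸ hG.add i (hmin _ hij.1 hiq) j (hmin _ hij.2.1 hjq))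
    · intro ij hij
      simp only [Finset.mem_insert, Finset.mem_singleton] at hij
      rcases hij with h | h <;> (rw [h]; rw [Finset.mem_antidiagonal])
      · exact ⟨hx0, hqBad.1, zero_add q⟩
      · exact ⟨hqBad.1, hx0, add_zero q⟩
  have hzq : z.coeff q = 2 * (x.coeff 0 * x.coeff q) := by
    rw [← hxx, HahnSeries.coeff_mul, hA, Finset.sum_insert, Finset.sum_singleton]
    · ring
    · simp only [Finset.mem_singleton, Prod.mk.injEq]
      intro h
      exact hqne h.1.symm
  refine hqBad.2 (hz ?_)
  rw [HahnSeries.mem_support, hzq]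
  exact mul_ne_zero two_ne_zero (mul_ne_zero hx0 hqBad.1)

theorem closure_pos {U : Set ℚ} (hU : U ⊆ {q : ℚ | 0 ≤ q}) :
    ∀ x ∈ AddSubmonoid.closure U, (0:ℚ) ≤ x := by
  intro x hx
  induction hx using AddSubmonoid.closure_induction with
  | mem y hy => exact hU hy
  | zero => exact le_refl 0
  | add y z _ _ hy hz => exact add_nonneg hy hz

theorem closure_decomp {U : Set ℚ} (hU : U ⊆ {q : ℚ | 0 ≤ q}) :
    ∀ x ∈ AddSubmonoid.closure U, x ≠ 0 →
      ∃ a ∈ U, 0 < a ∧ x - a ∈ AddSubmonoid.closure U := by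
  intro x hx
  induction hx using AddSubmonoid.closure_induction with
  | mem y hy =>
    intro hy0
    refine ⟨y, hy, lt_of_le_of_ne (hU hy) (Ne.symm hy0), ?_⟩
    rw [sub_self]
    exact AddSubmonoid.zero_mem _
  | zero => intro h; exact absurd rfl h
  | add y z hy hz ihy ihz =>
    intro hyz
    by_cases hy0 : y = 0
    · subst hy0
      obtain ⟨a, ha, hapos, hmem⟩ := ihz (by simpa using hyz)
      exact ⟨a, ha, hapos, by simpa using hmem⟩
    · obtain ⟨a, ha, hapos, hmem⟩ := ihy hy0
      refine ⟨a, ha, hapos, ?_⟩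
      have : y + z - a = (y - a) + z := by ring
      rw [this]
      exact AddSubmonoid.add_mem _ hmem hz

theorem leftFinite_closure {U : Set ℚ} (hUf : LeftFinite U) (hUpos : U ⊆ {q : ℚ | 0 ≤ q}) :
    LeftFinite (AddSubmonoid.closure U : Set ℚ) := by
  by_cases hP : ∃ a ∈ U, 0 < a
  · obtain ⟨a0, ha0U, ha0⟩ := hP
    set Q : Finset ℚ := (hUf (a0+1)).toFinset.filter (fun q => 0 < q) with hQ
    have ha0Q : a0 ∈ Q :=
      Finset.mem_filter.2 ⟨(Set.Finite.mem_toFinset _).2 ⟨ha0U, by linarith⟩, ha0⟩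
    have hQne : Q.Nonempty := ⟨a0, ha0Q⟩
    set μ := Q.min' hQne with hμ
    have hμpos : 0 < μ := by
      have := Finset.mem_filter.1 (Q.min'_mem hQne)
      exact this.2
    have hμlb : ∀ a ∈ U, 0 < a → μ ≤ a := by
      intro a ha hapos
      by_cases h : a < a0 + 1
      · exact Q.min'_le a (Finset.mem_filter.2 ⟨(Set.Finite.mem_toFinset _).2 ⟨ha, h⟩, hapos⟩)
      · have h1 : μ ≤ a0 := Q.min'_le a0 ha0Q
        linarith [not_lt.1 h]
    have main : ∀ m : ℕ, ({x ∈ (AddSubmonoid.closure U : Set ℚ) | x < (m:ℚ) * μ}).Finite := by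
      intro m
      induction m with
      | zero =>
        apply Set.Finite.subset Set.finite_empty
        rintro x ⟨hx, hlt⟩
        norm_num at hlt
        exact absurd (closure_pos hUpos x hx) (not_le.2 hlt)
      | succ m ih =>
        have hT : ({q ∈ U | q < ((m:ℚ)+1) * μ}).Finite := hUf _
        apply Set.Finite.subset ((Set.finite_singleton (0:ℚ)).union (hT.add ih))
        rintro x ⟨hxcl, hxlt⟩
        push_cast at hxlt
        by_cases hx0 : x = 0
        · exact Or.inl (by simp [hx0])
        · obtain ⟨a, haU, hapos, hsub⟩ := closure_decomp hUpos x hxcl hx0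
          have hxa : 0 ≤ x - a := closure_pos hUpos _ hsub
          have hμa := hμlb a haU hapos
          refine Or.inr ?_
          rw [Set.mem_add]
          exact ⟨a, ⟨haU, by linarith⟩, x - a, ⟨hsub, by linarith⟩, by ring⟩
    intro r
    obtain ⟨m, hm⟩ := exists_nat_ge (r / μ)
    apply (main m).subset
    rintro x ⟨h1, h2⟩
    refine ⟨h1, lt_of_lt_of_le h2 ?_⟩
    rw [div_le_iff₀ hμpos] at hm
    linarith
  · have hsub : (AddSubmonoid.closure U : Set ℚ) ⊆ {0} := by
      intro x hx
      by_contra hx0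
      obtain ⟨a, ha, hapos, -⟩ := closure_decomp hUpos x hx (by simpa using hx0)
      exact hP ⟨a, ha, hapos⟩
    exact ((Set.finite_singleton 0).subset hsub).leftFinite

theorem good_closure {U : Set ℚ} (hUf : LeftFinite U) (hUpos : U ⊆ {q : ℚ | 0 ≤ q}) :
    Good (AddSubmonoid.closure U : Set ℚ) :=
  ⟨(AddSubmonoid.closure U).zero_mem, fun a ha b hb => AddSubmonoid.add_mem _ ha hb,
    closure_pos hUpos, leftFinite_closure hUf hUpos⟩

theorem Good.lb (hG : Good G) : ∃ μ : ℚ, 0 < μ ∧ ∀ p ∈ G, p ≠ 0 → μ ≤ p := by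
  set Q : Finset ℚ := (hG.fin 1).toFinset.filter (fun q => 0 < q) with hQdef
  by_cases hQ : Q.Nonempty
  · refine ⟨min 1 (Q.min' hQ), lt_min one_pos (Finset.mem_filter.1 (Q.min'_mem hQ)).2, ?_⟩
    intro p hp hp0
    have hppos : 0 < p := lt_of_le_of_ne (hG.pos p hp) (Ne.symm hp0)
    by_cases h1 : p < 1
    · exact le_trans (min_le_right _ _)
        (Q.min'_le p (Finset.mem_filter.2 ⟨(Set.Finite.mem_toFinset _).2 ⟨hp, h1⟩, hppos⟩))
    · exact le_trans (min_le_left _ _) (not_lt.1 h1)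
  · refine ⟨1, one_pos, ?_⟩
    intro p hp hp0
    have hppos : 0 < p := lt_of_le_of_ne (hG.pos p hp) (Ne.symm hp0)
    by_contra h1
    exact hQ ⟨p, Finset.mem_filter.2 ⟨(Set.Finite.mem_toFinset _).2 ⟨hp, not_le.1 h1⟩, hppos⟩⟩

theorem sum_coeff {α : Type*} (f : α → HahnSeries ℚ ℂ) (S : Finset α) (q : ℚ) :
    (∑ i ∈ S, f i).coeff q = ∑ i ∈ S, (f i).coeff q :=
  map_sum (HahnSeries.coeff.addMonoidHom q) f S

theorem pow_coeff_tendsto (hG : Good G) {x : HahnSeries ℚ ℂ} (hx : x.support ⊆ G)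
    (hx0 : ‖x.coeff 0‖ < 1) (q : ℚ) :
    Filter.Tendsto (fun k => (x ^ k).coeff q) Filter.atTop (nhds 0) := by
  obtain ⟨μ, hμpos, hμlb⟩ := hG.lb
  set c := x.coeff 0 with hc
  set h := x - HahnSeries.single 0 c with hh
  have hsingle : (HahnSeries.single (0:ℚ) c).support ⊆ G := fun p hp => by
    rcases support_single_subset hp with rfl; exact hG.zero
  have hhsupp : h.support ⊆ G := supp_sub_subset hx hsingle
  have hh0 : h.coeff 0 = 0 := by
    rw [hh, HahnSeries.coeff_sub, HahnSeries.coeff_single_same, hc, sub_self]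
  have hlb : ∀ p ∈ h.support, μ ≤ p := by
    intro p hp
    refine hμlb p (hhsupp hp) ?_
    rintro rfl
    exact hp hh0
  have hpow : ∀ m : ℕ, ∀ p ∈ (h ^ m).support, (m:ℚ) * μ ≤ p := by
    intro m
    induction m with
    | zero =>
      intro p hp
      rw [pow_zero] at hp
      rcases support_single_subset hp with rfl
      norm_num
    | succ m ih =>
      intro p hp
      rw [pow_succ] at hp
      obtain ⟨i, hi, j, hj, rfl⟩ := support_mul_subset hp
      have h1 := ih i hi
      have h2 := hlb j hj
      push_cast
      linarith
  obtain ⟨M0, hM0⟩ := exists_nat_gt (q / μ)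
  have hM0q : q < (M0:ℚ) * μ := by rw [div_lt_iff₀ hμpos] at hM0; linarith
  have hvanish : ∀ m : ℕ, M0 ≤ m → (h ^ m).coeff q = 0 := by
    intro m hm
    by_contra h0
    have h1 := hpow m q h0
    have h2 : (M0:ℚ) * μ ≤ (m:ℚ) * μ := by
      apply mul_le_mul_of_nonneg_right _ (le_of_lt hμpos)
      exact_mod_cast hm
    linarith
  have hxeq : x = h + HahnSeries.single 0 c := by rw [hh]; ring
  have hterm : ∀ k m : ℕ,
      (h ^ m * HahnSeries.single (0:ℚ) c ^ (k - m) * ((k.choose m : ℕ) : HahnSeries ℚ ℂ)).coeff q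
        = (h ^ m).coeff q * c ^ (k - m) * (k.choose m : ℂ) := by
    intro k m
    have hsc : (HahnSeries.single (0:ℚ) c) ^ (k - m) = HahnSeries.single (0:ℚ) (c ^ (k-m)) := by
      rw [HahnSeries.single_pow]
      simp
    have hnat : ((k.choose m : ℕ) : HahnSeries ℚ ℂ)
        = HahnSeries.single (0:ℚ) ((k.choose m : ℕ) : ℂ) := by
      rw [← HahnSeries.C_apply, map_natCast]
    rw [hsc, hnat, HahnSeries.coeff_mul_single_zero, HahnSeries.coeff_mul_single_zero]
  have hcoeff : ∀ k : ℕ, M0 ≤ k → (x ^ k).coeff q =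
      ∑ m ∈ Finset.range M0, (h ^ m).coeff q * c ^ (k - m) * (k.choose m : ℂ) := by
    intro k hk
    conv_lhs => rw [hxeq]
    rw [add_pow, sum_coeff]
    rw [Finset.sum_congr rfl (fun m _ => hterm k m)]
    refine (Finset.sum_subset (Finset.range_subset_range.2 (le_trans hk (Nat.le_succ k))) ?_).symm
    intro m _ hm
    rw [Finset.mem_range, not_lt] at hm
    rw [hvanish m hm, zero_mul, zero_mul]
  have hev : ∀ᶠ k in Filter.atTop,
      (∑ m ∈ Finset.range M0, (h ^ m).coeff q * c ^ (k - m) * (k.choose m : ℂ))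
        = (x ^ k).coeff q :=
    Filter.eventually_atTop.2 ⟨M0, fun k hk => (hcoeff k hk).symm⟩
  refine Filter.Tendsto.congr' hev ?_
  have hzero : (0:ℂ) = ∑ _m ∈ Finset.range M0, (0:ℂ) := by simp
  rw [hzero]
  apply tendsto_finset_sum
  intro m _
  by_cases hc0 : c = 0
  · have hev0 : (fun k : ℕ => (h ^ m).coeff q * c ^ (k - m) * (k.choose m : ℂ))
        =ᶠ[Filter.atTop] fun _ => (0:ℂ) :=
      Filter.eventually_atTop.2 ⟨m+1, fun k hk => by
        show (h ^ m).coeff q * c ^ (k - m) * (k.choose m : ℂ) = 0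
        rw [hc0, zero_pow (by omega : k - m ≠ 0), mul_zero, zero_mul]⟩
    exact Filter.Tendsto.congr' hev0.symm tendsto_const_nhds
  · have hcnorm : ‖c‖ < 1 := by exact hx0
    have hcne : ‖c‖ ≠ 0 := norm_ne_zero_iff.2 hc0
    set B := ‖(h ^ m).coeff q‖ * (‖c‖⁻¹) ^ m with hB
    apply squeeze_zero_norm'
        (a := fun k : ℕ => B * ((k:ℝ) ^ m * ‖c‖ ^ k))
    · refine Filter.eventually_atTop.2 ⟨m, fun k hk => ?_⟩
      have h1 : ‖(h ^ m).coeff q * c ^ (k - m) * (k.choose m : ℂ)‖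
          = ‖(h ^ m).coeff q‖ * ‖c‖ ^ (k - m) * (k.choose m : ℝ) := by
        rw [norm_mul, norm_mul, norm_pow, Complex.norm_natCast]
      rw [h1, pow_sub₀ _ hcne hk]
      have h2 : ((k.choose m : ℕ) : ℝ) ≤ (k:ℝ) ^ m := by
        calc ((k.choose m : ℕ) : ℝ) ≤ ((k ^ m : ℕ) : ℝ) := by exact_mod_cast Nat.choose_le_pow k m
        _ = (k:ℝ) ^ m := by push_cast; ring
      calc ‖(h ^ m).coeff q‖ * (‖c‖ ^ k * (‖c‖ ^ m)⁻¹) * (k.choose m : ℝ)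
          ≤ ‖(h ^ m).coeff q‖ * (‖c‖ ^ k * (‖c‖ ^ m)⁻¹) * (k:ℝ) ^ m := by
            apply mul_le_mul_of_nonneg_left h2
            positivity
        _ = B * ((k:ℝ) ^ m * ‖c‖ ^ k) := by rw [hB, inv_pow]; ring
    · have hlim := tendsto_pow_const_mul_const_pow_of_lt_one m (norm_nonneg c) hcnorm
      have := hlim.const_mul B
      simpa using this

theorem tendsto_coeff_of_not_mem (hG : Good G) {b : ℕ → HahnSeries ℚ ℂ} {B : HahnSeries ℚ ℂ}
    (hsb : ∀ᶠ k in Filter.atTop, (b k).support ⊆ G) (hSB : B.support ⊆ G) {q : ℚ}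
    (hq : q ∉ G) :
    Filter.Tendsto (fun k => (b k).coeff q) Filter.atTop (nhds (B.coeff q)) := by
  have hB : B.coeff q = 0 := by
    by_contra h
    exact hq (hSB h)
  rw [hB]
  have hev : (fun _ : ℕ => (0:ℂ)) =ᶠ[Filter.atTop] fun k => (b k).coeff q := by
    filter_upwards [hsb] with k hk
    by_contra h
    exact hq (hk fun h0 => h (h0.symm))
  exact Filter.Tendsto.congr' hev tendsto_const_nhds

theorem card_lt (hG : Good G) {p q : ℚ} (hp : p ∈ G) (hpq : p < q) :
    ((hG.fin p).toFinset).card < ((hG.fin q).toFinset).card := by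
  apply Finset.card_lt_card
  rw [Finset.ssubset_iff_of_subset]
  · exact ⟨p, (Set.Finite.mem_toFinset _).2 ⟨hp, hpq⟩,
      fun h => absurd ((Set.Finite.mem_toFinset _).1 h).2 (lt_irrefl p)⟩
  · intro r hr
    obtain ⟨h1, h2⟩ := (Set.Finite.mem_toFinset _).1 hr
    exact (Set.Finite.mem_toFinset _).2 ⟨h1, lt_trans h2 hpq⟩

theorem div_tendsto (hG : Good G) {a b : ℕ → HahnSeries ℚ ℂ} {A B : HahnSeries ℚ ℂ}
    (hsa : ∀ᶠ k in Filter.atTop, (a k).support ⊆ G)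
    (hsb : ∀ᶠ k in Filter.atTop, (b k).support ⊆ G)
    (hSA : A.support ⊆ G) (hSB : B.support ⊆ G)
    (hmul : ∀ᶠ k in Filter.atTop, a k * b k = 1) (hM : A * B = 1)
    (hconv : ∀ q, Filter.Tendsto (fun k => (a k).coeff q) Filter.atTop (nhds (A.coeff q))) :
    ∀ q, Filter.Tendsto (fun k => (b k).coeff q) Filter.atTop (nhds (B.coeff q)) := by
  have hA0B0 : A.coeff 0 * B.coeff 0 = 1 := by
    have h := mul_coeff_zero' (fun p hp => hG.pos p (hSA hp)) (fun p hp => hG.pos p (hSB hp))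
    rw [hM] at h
    rw [← h]
    simp
  have hA0 : A.coeff 0 ≠ 0 := left_ne_zero_of_mul_eq_one hA0B0
  suffices key : ∀ n : ℕ, ∀ q : ℚ, q ∈ G → ((hG.fin q).toFinset).card = n →
      Filter.Tendsto (fun k => (b k).coeff q) Filter.atTop (nhds (B.coeff q)) by
    intro q
    by_cases hq : q ∈ G
    · exact key _ q hq rfl
    · exact tendsto_coeff_of_not_mem hG hsb hSB hq
  intro n
  induction n using Nat.strong_induction_on with
  | _ n IH =>
    intro q hqG hcard
    subst hcard
    have HT : ∀ p : ℚ, p < q →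
        Filter.Tendsto (fun k => (b k).coeff p) Filter.atTop (nhds (B.coeff p)) := by
      intro p hp
      by_cases hpG : p ∈ G
      · exact IH _ (card_lt hG hpG hp) p hpG rfl
      · exact tendsto_coeff_of_not_mem hG hsb hSB hpG
    have h0F : (0:ℚ) ∈ Fq hG q := (mem_Fq hG).2 ⟨hG.zero, by linarith [hG.pos q hqG]⟩
    have hident : ∀ᶠ k in Filter.atTop, (a k).coeff 0 * (b k).coeff q
        = (1 : HahnSeries ℚ ℂ).coeff q
          - ∑ p ∈ (Fq hG q).erase 0, (a k).coeff p * (b k).coeff (q - p) := by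
      filter_upwards [hmul, hsa, hsb] with k hm ha hb
      have h := mul_coeff_eqF hG ha hb q
      rw [hm, ← Finset.add_sum_erase _ _ h0F, sub_zero] at h
      rw [h]
      ring
    have hidentL : A.coeff 0 * B.coeff q
        = (1 : HahnSeries ℚ ℂ).coeff q
          - ∑ p ∈ (Fq hG q).erase 0, A.coeff p * B.coeff (q - p) := by
      have h := mul_coeff_eqF hG hSA hSB q
      rw [hM, ← Finset.add_sum_erase _ _ h0F, sub_zero] at h
      rw [h]
      ring
    have hsumT : Filter.Tendsto
        (fun k => ∑ p ∈ (Fq hG q).erase 0, (a k).coeff p * (b k).coeff (q - p))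
        Filter.atTop (nhds (∑ p ∈ (Fq hG q).erase 0, A.coeff p * B.coeff (q - p))) := by
      apply tendsto_finset_sum
      intro p hp
      obtain ⟨hp0, hpF⟩ := Finset.mem_erase.1 hp
      have hppos : 0 < p := lt_of_le_of_ne (hG.pos p ((mem_Fq hG).1 hpF).1) (Ne.symm hp0)
      exact (hconv p).mul (HT (q - p) (by linarith))
    have ha0 := hconv 0
    have ha0ne : ∀ᶠ k in Filter.atTop, (a k).coeff 0 ≠ 0 := ha0.eventually_ne hA0
    have hev : (fun k => ((1 : HahnSeries ℚ ℂ).coeff q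
          - ∑ p ∈ (Fq hG q).erase 0, (a k).coeff p * (b k).coeff (q - p)) / (a k).coeff 0)
        =ᶠ[Filter.atTop] fun k => (b k).coeff q := by
      filter_upwards [hident, ha0ne] with k h1 h2
      rw [← h1, mul_comm, mul_div_assoc, div_self h2, mul_one]
    refine Filter.Tendsto.congr' hev ?_
    have hlim := ((tendsto_const_nhds (x := (1 : HahnSeries ℚ ℂ).coeff q)).sub hsumT).div ha0 hA0
    have hval : ((1 : HahnSeries ℚ ℂ).coeff q
          - ∑ p ∈ (Fq hG q).erase 0, A.coeff p * B.coeff (q - p)) / A.coeff 0 = B.coeff q := by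
      rw [← hidentL, mul_comm, mul_div_assoc, div_self hA0, mul_one]
    rw [hval] at hlim
    exact hlim

theorem sqrt_coeff_eq {z : ℂ} (him : z.im = 0) (hre : 0 ≤ z.re) :
    ((Real.sqrt ((z*z).re) : ℝ) : ℂ) = z := by
  have hz : z = ((z.re : ℝ) : ℂ) := Complex.ext rfl (by simp [him])
  rw [hz, ← Complex.ofReal_mul, Complex.ofReal_re, Real.sqrt_mul_self hre]

theorem sqrt_tendsto (hG : Good G) {a : ℕ → HahnSeries ℚ ℂ} {A : HahnSeries ℚ ℂ}
    {c : ℕ → HahnSeries ℚ ℂ} {C : HahnSeries ℚ ℂ}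
    (hsa : ∀ᶠ k in Filter.atTop, (a k).support ⊆ G) (hSA : A.support ⊆ G)
    (hmul : ∀ᶠ k in Filter.atTop, a k * a k = c k) (hM : A * A = C)
    (hsign : ∀ᶠ k in Filter.atTop, ((a k).coeff 0).im = 0 ∧ 0 ≤ ((a k).coeff 0).re)
    (hSign : (A.coeff 0).im = 0 ∧ 0 ≤ (A.coeff 0).re)
    (hA0 : A.coeff 0 ≠ 0)
    (hc : ∀ q, Filter.Tendsto (fun k => (c k).coeff q) Filter.atTop (nhds (C.coeff q))) :
    ∀ q, Filter.Tendsto (fun k => (a k).coeff q) Filter.atTop (nhds (A.coeff q)) := by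
  suffices key : ∀ n : ℕ, ∀ q : ℚ, q ∈ G → ((hG.fin q).toFinset).card = n →
      Filter.Tendsto (fun k => (a k).coeff q) Filter.atTop (nhds (A.coeff q)) by
    intro q
    by_cases hq : q ∈ G
    · exact key _ q hq rfl
    · exact tendsto_coeff_of_not_mem hG hsa hSA hq
  intro n
  induction n using Nat.strong_induction_on with
  | _ n IH =>
    intro q hqG hcard
    subst hcard
    by_cases hq0 : q = 0
    · subst hq0
      -- base case: square roots of the zeroth coefficients
      have hbase : ∀ᶠ k in Filter.atTop,
          ((Real.sqrt (((c k).coeff 0).re) : ℝ) : ℂ) = (a k).coeff 0 := by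
        filter_upwards [hmul, hsa, hsign] with k hm ha hs
        have hz : (c k).coeff 0 = (a k).coeff 0 * (a k).coeff 0 := by
          rw [← hm, mul_coeff_zero' (fun p hp => hG.pos p (ha hp)) (fun p hp => hG.pos p (ha hp))]
        rw [hz]
        exact sqrt_coeff_eq hs.1 hs.2
      refine Filter.Tendsto.congr' hbase ?_
      have hre : Filter.Tendsto (fun k => ((c k).coeff 0).re) Filter.atTop
          (nhds ((C.coeff 0).re)) := (Complex.continuous_re.tendsto _).comp (hc 0)
      have hsq : Filter.Tendsto (fun k => Real.sqrt (((c k).coeff 0).re)) Filter.atTop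
          (nhds (Real.sqrt ((C.coeff 0).re))) := (Real.continuous_sqrt.tendsto _).comp hre
      have hlim := (Complex.continuous_ofReal.tendsto _).comp hsq
      have hval : ((Real.sqrt ((C.coeff 0).re) : ℝ) : ℂ) = A.coeff 0 := by
        have hz : C.coeff 0 = A.coeff 0 * A.coeff 0 := by
          rw [← hM, mul_coeff_zero' (fun p hp => hG.pos p (hSA hp)) (fun p hp => hG.pos p (hSA hp))]
        rw [hz]
        exact sqrt_coeff_eq hSign.1 hSign.2
      rw [hval] at hlim
      exact hlim
    · have hqpos : 0 < q := lt_of_le_of_ne (hG.pos q hqG) (Ne.symm hq0)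
      have HT : ∀ p : ℚ, p < q →
          Filter.Tendsto (fun k => (a k).coeff p) Filter.atTop (nhds (A.coeff p)) := by
        intro p hp
        by_cases hpG : p ∈ G
        · exact IH _ (card_lt hG hpG hp) p hpG rfl
        · exact tendsto_coeff_of_not_mem hG hsa hSA hpG
      have h0F : (0:ℚ) ∈ Fq hG q := (mem_Fq hG).2 ⟨hG.zero, by linarith⟩
      have hqE : q ∈ (Fq hG q).erase 0 :=
        Finset.mem_erase.2 ⟨hq0, (mem_Fq hG).2 ⟨hqG, by linarith⟩⟩
      set E := ((Fq hG q).erase 0).erase q with hE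
      have hsplit : ∀ x : HahnSeries ℚ ℂ, x.support ⊆ G →
          ∑ p ∈ Fq hG q, x.coeff p * x.coeff (q - p)
            = 2 * (x.coeff 0 * x.coeff q) + ∑ p ∈ E, x.coeff p * x.coeff (q - p) := by
        intro x hx
        rw [← Finset.add_sum_erase _ _ h0F, ← Finset.add_sum_erase _ _ hqE, sub_zero, sub_self]
        ring
      have hident : ∀ᶠ k in Filter.atTop, (c k).coeff q
          = 2 * ((a k).coeff 0 * (a k).coeff q) + ∑ p ∈ E, (a k).coeff p * (a k).coeff (q - p) := by
        filter_upwards [hmul, hsa] with k hm ha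
        rw [← hm, mul_coeff_eqF hG ha ha q, hsplit (a k) ha]
      have hidentL : C.coeff q
          = 2 * (A.coeff 0 * A.coeff q) + ∑ p ∈ E, A.coeff p * A.coeff (q - p) := by
        rw [← hM, mul_coeff_eqF hG hSA hSA q, hsplit A hSA]
      have hsumT : Filter.Tendsto
          (fun k => ∑ p ∈ E, (a k).coeff p * (a k).coeff (q - p))
          Filter.atTop (nhds (∑ p ∈ E, A.coeff p * A.coeff (q - p))) := by
        apply tendsto_finset_sum
        intro p hp
        obtain ⟨hpq, hp0, hpF⟩ : p ≠ q ∧ p ≠ 0 ∧ p ∈ Fq hG q := by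
          obtain ⟨h1, h2⟩ := Finset.mem_erase.1 hp
          obtain ⟨h3, h4⟩ := Finset.mem_erase.1 h2
          exact ⟨h1, h3, h4⟩
        have hppos : 0 < p := lt_of_le_of_ne (hG.pos p ((mem_Fq hG).1 hpF).1) (Ne.symm hp0)
        by_cases hplt : p < q
        · exact (HT p hplt).mul (HT (q - p) (by linarith))
        · have hqp : q - p < 0 := by
            rcases lt_or_eq_of_le (not_lt.1 hplt) with h | h
            · linarith
            · exact absurd h.symm hpq
          have hAz : A.coeff (q - p) = 0 := coeff_eq_zero_of_neg hG hSA hqp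
          have hev0 : (fun _ : ℕ => (0:ℂ))
              =ᶠ[Filter.atTop] fun k => (a k).coeff p * (a k).coeff (q - p) := by
            filter_upwards [hsa] with k ha
            rw [coeff_eq_zero_of_neg hG ha hqp, mul_zero]
          rw [hAz, mul_zero]
          exact Filter.Tendsto.congr' hev0 tendsto_const_nhds
      have ha0 : Filter.Tendsto (fun k => (a k).coeff 0) Filter.atTop (nhds (A.coeff 0)) :=
        HT 0 hqpos
      have ha0ne : ∀ᶠ k in Filter.atTop, (a k).coeff 0 ≠ 0 := ha0.eventually_ne hA0
      have hev : (fun k => ((c k).coeff q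
            - ∑ p ∈ E, (a k).coeff p * (a k).coeff (q - p)) / (2 * (a k).coeff 0))
          =ᶠ[Filter.atTop] fun k => (a k).coeff q := by
        filter_upwards [hident, ha0ne] with k h1 h2
        rw [h1]
        field_simp
        ring
      refine Filter.Tendsto.congr' hev ?_
      have h2A0 : (2 : ℂ) * A.coeff 0 ≠ 0 := mul_ne_zero two_ne_zero hA0
      have hlim := ((hc q).sub hsumT).div
        ((tendsto_const_nhds (x := (2:ℂ))).mul ha0) h2A0
      have hval : (C.coeff q - ∑ p ∈ E, A.coeff p * A.coeff (q - p)) / (2 * A.coeff 0)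
          = A.coeff q := by
        rw [hidentL]
        field_simp
        ring
      rw [hval] at hlim
      exact hlim

theorem supp_sum_subset {α : Type*} {f : α → HahnSeries ℚ ℂ} {S : Finset α}
    (h : ∀ i ∈ S, (f i).support ⊆ G) : (∑ i ∈ S, f i).support ⊆ G := by
  intro q hq
  rw [HahnSeries.mem_support, sum_coeff] at hq
  obtain ⟨i, hi, hne⟩ := Finset.exists_ne_zero_of_sum_ne_zero hq
  exact h i hi hne

theorem supp_add_subset {x y : HahnSeries ℚ ℂ} (hx : x.support ⊆ G) (hy : y.support ⊆ G) :
    (x + y).support ⊆ G := by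
  intro q hq
  have h : (x + y).coeff q ≠ 0 := hq
  rw [HahnSeries.coeff_add] at h
  by_cases h1 : x.coeff q = 0
  · exact hy (by simpa [h1] using h)
  · exact hx h1

theorem order_zero_of_sq (hG : Good G) {z c : HahnSeries ℚ ℂ} (hzz : z * z = c)
    (hc : c.support ⊆ G) (hc0 : c.coeff 0 ≠ 0) (hz : z ≠ 0) :
    (∀ p ∈ z.support, (0:ℚ) ≤ p) ∧ z.coeff 0 ≠ 0 ∧ z.order = 0 := by
  have hcne : c ≠ 0 := fun h => hc0 (by rw [h, HahnSeries.coeff_zero])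
  have hord : c.order = 0 := by
    apply le_antisymm (HahnSeries.order_le_of_coeff_ne_zero hc0)
    exact hG.pos _ (hc ((mt HahnSeries.coeff_order_eq_zero.1 hcne)))
  have h2 : z.order + z.order = 0 := by
    rw [← HahnSeries.order_mul hz hz, hzz, hord]
  have hzord : z.order = 0 := by linarith
  refine ⟨fun p hp => ?_, ?_, hzord⟩
  · rw [← hzord]
    exact HahnSeries.order_le_of_coeff_ne_zero hp
  · rw [← hzord]
    exact (mt HahnSeries.coeff_order_eq_zero.1 hz)

end LCAux

open LeviCivitaField

/-- `1/‖w₁ + ξ_k‖₂ →wk 1/‖w₁‖₂`. -/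
theorem inv_l2norm_weakTendsto (n : ℕ) (hn : 2 ≤ n) [NeZero n]
    (ν : Fin n → LeviCivitaField ℂ)
    (hνfin : ∀ j, AtMostFinite (ν j))
    (hν1 : coeff (ν 0) 0 = 1)
    (hνj : ∀ j : Fin n, j ≠ 0 → ‖coeff (ν j) 0‖ < 1)
    (r : Fin n → LeviCivitaField ℂ) (hr : ∀ j : Fin n, j ≠ 0 → r j * ν 0 = ν j)
    (w : Fin n → Fin n → LeviCivitaField ℂ) (hw : ∀ j i, AtMostFinite (w j i))
    (hw1 : ∃ i, coeff (w 0 i) 0 ≠ 0)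
    (ξ : ℕ → Fin n → LeviCivitaField ℂ)
    (hξ : ∀ k i, ξ k i = ∑ j ∈ Finset.univ.erase (0 : Fin n), r j ^ k * w j i)
    (s : ℕ → LeviCivitaField ℂ) (hs : ∀ k, NonnegC (s k))
    (hssq : ∀ k, s k * s k = ∑ i, conj (w 0 i + ξ k i) * (w 0 i + ξ k i))
    (S : LeviCivitaField ℂ) (hS : NonnegC S)
    (hSsq : S * S = ∑ i, conj (w 0 i) * w 0 i)
    (t : ℕ → LeviCivitaField ℂ) (htr : ∀ k, IsReal (t k)) (hst : ∀ k, s k * t k = 1)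
    (T : LeviCivitaField ℂ) (hTr : IsReal T) (hST : S * T = 1) :
    WeakTendsto t T := by
  classical
  open Filter LCAux in
  -- Hahn series versions of everything
  set b : ℕ → HahnSeries ℚ ℂ := fun k => ((t k : LeviCivitaField ℂ) : HahnSeries ℚ ℂ) with hbdef
  set B : HahnSeries ℚ ℂ := ((T : LeviCivitaField ℂ) : HahnSeries ℚ ℂ) with hBdef
  -- the ambient support set
  have hfinU : ∀ (A : Fin n → Set ℚ), (∀ j, LeftFinite (A j)) → LeftFinite (⋃ j, A j) := by
    intro A hA ρ'
    apply Set.Finite.subset (Set.finite_iUnion fun j => hA j ρ')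
    rintro q ⟨hq, hρ⟩
    rw [Set.mem_iUnion] at hq ⊢
    obtain ⟨j, hj⟩ := hq
    exact ⟨j, hj, hρ⟩
  set U : Set ℚ := (⋃ j, ((ν j : LeviCivitaField ℂ) : HahnSeries ℚ ℂ).support)
      ∪ ⋃ j, ⋃ i, ((w j i : LeviCivitaField ℂ) : HahnSeries ℚ ℂ).support with hUdef
  have hUf : LeftFinite U :=
    LeftFinite.union (hfinU _ fun j => (ν j).2) (hfinU _ fun j => hfinU _ fun i => (w j i).2)
  have hUpos : U ⊆ {q : ℚ | 0 ≤ q} := by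
    rintro q (hq | hq) <;> rw [Set.mem_iUnion] at hq
    · obtain ⟨j, hj⟩ := hq
      by_contra hneg
      exact hj (hνfin j q (not_le.1 hneg))
    · obtain ⟨j, hj⟩ := hq
      rw [Set.mem_iUnion] at hj
      obtain ⟨i, hi⟩ := hj
      by_contra hneg
      exact hi (hw j i q (not_le.1 hneg))
  set Gs : Set ℚ := (AddSubmonoid.closure U : Set ℚ) with hGsdef
  have hG : Good Gs := good_closure hUf hUpos
  have hνsupp : ∀ j, ((ν j : LeviCivitaField ℂ) : HahnSeries ℚ ℂ).support ⊆ Gs :=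
    fun j p hp => AddSubmonoid.subset_closure (Or.inl (Set.mem_iUnion.2 ⟨j, hp⟩))
  have hwsupp : ∀ j i, ((w j i : LeviCivitaField ℂ) : HahnSeries ℚ ℂ).support ⊆ Gs :=
    fun j i p hp => AddSubmonoid.subset_closure
      (Or.inr (Set.mem_iUnion.2 ⟨j, Set.mem_iUnion.2 ⟨i, hp⟩⟩))
  have hν00 : ((ν 0 : LeviCivitaField ℂ) : HahnSeries ℚ ℂ).coeff 0 = 1 := hν1
  -- the elements r j
  have hrmul : ∀ j : Fin n, j ≠ 0 →
      ((r j : LeviCivitaField ℂ) : HahnSeries ℚ ℂ) * ((ν 0 : LeviCivitaField ℂ) : HahnSeries ℚ ℂ)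
        = ((ν j : LeviCivitaField ℂ) : HahnSeries ℚ ℂ) := by
    intro j hj
    calc ((r j : LeviCivitaField ℂ) : HahnSeries ℚ ℂ) * ↑(ν 0) = ((r j * ν 0 : LeviCivitaField ℂ) : HahnSeries ℚ ℂ) := rfl
      _ = ↑(ν j) := by rw [hr j hj]
  have hrsupp : ∀ j : Fin n, j ≠ 0 → ((r j : LeviCivitaField ℂ) : HahnSeries ℚ ℂ).support ⊆ Gs := by
    intro j hj
    refine support_of_mul_eq hG (z := ((ν j : LeviCivitaField ℂ) : HahnSeries ℚ ℂ)) ?_ (hνsupp 0) (hνsupp j) (by rw [hν00]; exact one_ne_zero)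
    rw [mul_comm]
    exact hrmul j hj
  have hrabs : ∀ j : Fin n, j ≠ 0 →
      ‖((r j : LeviCivitaField ℂ) : HahnSeries ℚ ℂ).coeff 0‖ < 1 := by
    intro j hj
    have h := mul_coeff_zero' (x := ((r j : LeviCivitaField ℂ) : HahnSeries ℚ ℂ))
      (y := ((ν 0 : LeviCivitaField ℂ) : HahnSeries ℚ ℂ))
      (fun p hp => hG.pos p (hrsupp j hj hp)) (fun p hp => hG.pos p (hνsupp 0 hp))
    rw [hrmul j hj, hν00, mul_one] at h
    rw [← h]
    exact hνj j hj
  -- the vectors ξ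
  have hξcoe : ∀ k i, ((ξ k i : LeviCivitaField ℂ) : HahnSeries ℚ ℂ)
      = ∑ j ∈ Finset.univ.erase (0 : Fin n),
          ((r j : LeviCivitaField ℂ) : HahnSeries ℚ ℂ) ^ k * ((w j i : LeviCivitaField ℂ) : HahnSeries ℚ ℂ) := by
    intro k i
    rw [hξ k i]
    push_cast
    rfl
  have hξsupp : ∀ k i, ((ξ k i : LeviCivitaField ℂ) : HahnSeries ℚ ℂ).support ⊆ Gs := by
    intro k i
    rw [hξcoe]
    apply supp_sum_subset
    intro j hj
    exact supp_mul_subset hG (supp_pow_subset hG (hrsupp j (Finset.ne_of_mem_erase hj)) k) (hwsupp j i)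
  have hξconv : ∀ i q, Filter.Tendsto (fun k => ((ξ k i : LeviCivitaField ℂ) : HahnSeries ℚ ℂ).coeff q)
      Filter.atTop (nhds 0) := by
    intro i q
    have hrw : ∀ k, ((ξ k i : LeviCivitaField ℂ) : HahnSeries ℚ ℂ).coeff q
        = ∑ j ∈ Finset.univ.erase (0 : Fin n), ∑ p ∈ Fq hG q,
            (((r j : LeviCivitaField ℂ) : HahnSeries ℚ ℂ) ^ k).coeff p
              * ((w j i : LeviCivitaField ℂ) : HahnSeries ℚ ℂ).coeff (q - p) := by
      intro k
      rw [hξcoe, sum_coeff]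
      apply Finset.sum_congr rfl
      intro j hj
      exact mul_coeff_eqF hG (supp_pow_subset hG (hrsupp j (Finset.ne_of_mem_erase hj)) k) (hwsupp j i) q
    have hlim : Filter.Tendsto (fun k => ∑ j ∈ Finset.univ.erase (0 : Fin n), ∑ p ∈ Fq hG q,
            (((r j : LeviCivitaField ℂ) : HahnSeries ℚ ℂ) ^ k).coeff p
              * ((w j i : LeviCivitaField ℂ) : HahnSeries ℚ ℂ).coeff (q - p)) Filter.atTop
        (nhds (∑ j ∈ Finset.univ.erase (0 : Fin n), ∑ p ∈ Fq hG q,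
            (0:ℂ) * ((w j i : LeviCivitaField ℂ) : HahnSeries ℚ ℂ).coeff (q - p))) := by
      apply tendsto_finset_sum
      intro j hj
      apply tendsto_finset_sum
      intro p _
      exact (pow_coeff_tendsto hG (hrsupp j (Finset.ne_of_mem_erase hj))
        (hrabs j (Finset.ne_of_mem_erase hj)) p).mul_const _
    have hz : (∑ j ∈ Finset.univ.erase (0 : Fin n), ∑ p ∈ Fq hG q,
        (0:ℂ) * ((w j i : LeviCivitaField ℂ) : HahnSeries ℚ ℂ).coeff (q - p)) = 0 := by simp
    rw [hz] at hlim
    exact Filter.Tendsto.congr (fun k => (hrw k).symm) hlim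
  -- the sums of squares
  set cseq : ℕ → HahnSeries ℚ ℂ := fun k => ∑ i,
      ((conj (w 0 i + ξ k i) : LeviCivitaField ℂ) : HahnSeries ℚ ℂ)
        * ((w 0 i + ξ k i : LeviCivitaField ℂ) : HahnSeries ℚ ℂ) with hcseqdef
  set C : HahnSeries ℚ ℂ := ∑ i,
      ((conj (w 0 i) : LeviCivitaField ℂ) : HahnSeries ℚ ℂ)
        * ((w 0 i : LeviCivitaField ℂ) : HahnSeries ℚ ℂ) with hCdef
  have hconjsupp : ∀ (x : LeviCivitaField ℂ),
      ((conj x : LeviCivitaField ℂ) : HahnSeries ℚ ℂ).support ⊆ ((x : LeviCivitaField ℂ) : HahnSeries ℚ ℂ).support := by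
    intro x p hp
    have h : ((conj x : LeviCivitaField ℂ) : HahnSeries ℚ ℂ).coeff p ≠ 0 := hp
    have h2 : (starRingEnd ℂ) ((x : HahnSeries ℚ ℂ).coeff p) ≠ 0 := h
    exact fun h0 => h2 (by rw [h0, map_zero])
  have hwξcoe : ∀ k i, ((w 0 i + ξ k i : LeviCivitaField ℂ) : HahnSeries ℚ ℂ)
      = ((w 0 i : LeviCivitaField ℂ) : HahnSeries ℚ ℂ) + ((ξ k i : LeviCivitaField ℂ) : HahnSeries ℚ ℂ) := fun k i => rfl
  have hwξsupp : ∀ k i, ((w 0 i + ξ k i : LeviCivitaField ℂ) : HahnSeries ℚ ℂ).support ⊆ Gs := by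
    intro k i
    rw [hwξcoe]
    exact supp_add_subset (hwsupp 0 i) (hξsupp k i)
  have hcssupp : ∀ k, (cseq k).support ⊆ Gs := fun k => supp_sum_subset fun i _ =>
    supp_mul_subset hG ((hconjsupp _).trans (hwξsupp k i)) (hwξsupp k i)
  have hCsupp : C.support ⊆ Gs := supp_sum_subset fun i _ =>
    supp_mul_subset hG ((hconjsupp _).trans (hwsupp 0 i)) (hwsupp 0 i)
  have hwξconv : ∀ i p, Filter.Tendsto (fun k => ((w 0 i + ξ k i : LeviCivitaField ℂ) : HahnSeries ℚ ℂ).coeff p)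
      Filter.atTop (nhds (((w 0 i : LeviCivitaField ℂ) : HahnSeries ℚ ℂ).coeff p)) := by
    intro i p
    have heq : ∀ k, ((w 0 i + ξ k i : LeviCivitaField ℂ) : HahnSeries ℚ ℂ).coeff p
        = ((w 0 i : LeviCivitaField ℂ) : HahnSeries ℚ ℂ).coeff p
          + ((ξ k i : LeviCivitaField ℂ) : HahnSeries ℚ ℂ).coeff p := fun k => rfl
    have hlim := (tendsto_const_nhds (x := ((w 0 i : LeviCivitaField ℂ) : HahnSeries ℚ ℂ).coeff p)).add (hξconv i p)
    rw [add_zero] at hlim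
    exact Filter.Tendsto.congr (fun k => (heq k).symm) hlim
  have hcconv : ∀ q, Filter.Tendsto (fun k => (cseq k).coeff q) Filter.atTop (nhds (C.coeff q)) := by
    intro q
    have hrw : ∀ k, (cseq k).coeff q = ∑ i, ∑ p ∈ Fq hG q,
        (starRingEnd ℂ) (((w 0 i + ξ k i : LeviCivitaField ℂ) : HahnSeries ℚ ℂ).coeff p)
          * ((w 0 i + ξ k i : LeviCivitaField ℂ) : HahnSeries ℚ ℂ).coeff (q - p) := by
      intro k
      rw [hcseqdef]
      rw [sum_coeff]
      apply Finset.sum_congr rfl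
      intro i _
      exact mul_coeff_eqF hG ((hconjsupp _).trans (hwξsupp k i)) (hwξsupp k i) q
    have hCrw : C.coeff q = ∑ i, ∑ p ∈ Fq hG q,
        (starRingEnd ℂ) (((w 0 i : LeviCivitaField ℂ) : HahnSeries ℚ ℂ).coeff p)
          * ((w 0 i : LeviCivitaField ℂ) : HahnSeries ℚ ℂ).coeff (q - p) := by
      rw [hCdef, sum_coeff]
      apply Finset.sum_congr rfl
      intro i _
      exact mul_coeff_eqF hG ((hconjsupp _).trans (hwsupp 0 i)) (hwsupp 0 i) q
    rw [hCrw]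
    refine Filter.Tendsto.congr (fun k => (hrw k).symm) ?_
    apply tendsto_finset_sum
    intro i _
    apply tendsto_finset_sum
    intro p _
    exact ((hwξconv i p).star).mul (hwξconv i (q - p))
  -- positivity of the zeroth coefficient of C
  have hC0 : C.coeff 0 = ((∑ i, Complex.normSq (((w 0 i : LeviCivitaField ℂ) : HahnSeries ℚ ℂ).coeff 0) : ℝ) : ℂ) := by
    rw [hCdef, sum_coeff]
    push_cast
    apply Finset.sum_congr rfl
    intro i _
    rw [mul_coeff_zero' (fun p hp => hG.pos p ((hconjsupp _).trans (hwsupp 0 i) hp))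
      (fun p hp => hG.pos p (hwsupp 0 i hp))]
    have : ((conj (w 0 i) : LeviCivitaField ℂ) : HahnSeries ℚ ℂ).coeff 0
        = (starRingEnd ℂ) (((w 0 i : LeviCivitaField ℂ) : HahnSeries ℚ ℂ).coeff 0) := rfl
    rw [this, mul_comm, Complex.mul_conj]
  have hC0pos : 0 < ∑ i, Complex.normSq (((w 0 i : LeviCivitaField ℂ) : HahnSeries ℚ ℂ).coeff 0) := by
    obtain ⟨i0, hi0⟩ := hw1
    exact Finset.sum_pos' (fun i _ => Complex.normSq_nonneg _)
      ⟨i0, Finset.mem_univ i0, Complex.normSq_pos.2 hi0⟩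
  have hC0ne : C.coeff 0 ≠ 0 := by
    rw [hC0]
    exact_mod_cast ne_of_gt hC0pos
  -- the limit square root A
  set A : HahnSeries ℚ ℂ := ((S : LeviCivitaField ℂ) : HahnSeries ℚ ℂ) with hAdef
  have hACeq : A * A = C := by
    calc A * A = ((S * S : LeviCivitaField ℂ) : HahnSeries ℚ ℂ) := rfl
      _ = ((∑ i, conj (w 0 i) * w 0 i : LeviCivitaField ℂ) : HahnSeries ℚ ℂ) := by rw [hSsq]
      _ = C := by rw [hCdef]; push_cast; rfl
  have hAne : A ≠ 0 := by
    intro h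
    apply hC0ne
    rw [← hACeq, h, mul_zero, HahnSeries.coeff_zero]
  obtain ⟨hApos, hA0ne, hAord⟩ := order_zero_of_sq hG hACeq hCsupp hC0ne hAne
  have hAsupp : A.support ⊆ Gs := support_of_sq hG hACeq hCsupp hA0ne hApos
  have hSne : S ≠ 0 := fun h => hAne (by rw [hAdef, h]; rfl)
  have hSposC : PosC S := (hS).resolve_left hSne
  have hAsign : (A.coeff 0).im = 0 ∧ 0 ≤ (A.coeff 0).re := by
    refine ⟨hSposC.1 0, ?_⟩
    have h2 := hSposC.2.2
    have hlam : lam S = (0:ℚ) := hAord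
    rw [hlam] at h2
    exact le_of_lt h2
  -- the sequence of square roots
  set aseq : ℕ → HahnSeries ℚ ℂ := fun k => ((s k : LeviCivitaField ℂ) : HahnSeries ℚ ℂ) with haseqdef
  have hacs : ∀ k, aseq k * aseq k = cseq k := by
    intro k
    calc aseq k * aseq k = ((s k * s k : LeviCivitaField ℂ) : HahnSeries ℚ ℂ) := rfl
      _ = ((∑ i, conj (w 0 i + ξ k i) * (w 0 i + ξ k i) : LeviCivitaField ℂ) : HahnSeries ℚ ℂ) := by rw [hssq k]
      _ = cseq k := by rw [hcseqdef]; push_cast; rfl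
  have hsne : ∀ k, s k ≠ 0 := by
    intro k h
    have := hst k
    rw [h, zero_mul] at this
    exact zero_ne_one this
  have hane : ∀ k, aseq k ≠ 0 := fun k h => hsne k (ZeroMemClass.coe_eq_zero.1 h)
  have hc0ev : ∀ᶠ k in Filter.atTop, (cseq k).coeff 0 ≠ 0 := (hcconv 0).eventually_ne hC0ne
  have haev : ∀ᶠ k in Filter.atTop, (∀ p ∈ (aseq k).support, (0:ℚ) ≤ p)
      ∧ (aseq k).coeff 0 ≠ 0 ∧ (aseq k).order = 0 :=
    hc0ev.mono fun k hk => order_zero_of_sq hG (hacs k) (hcssupp k) hk (hane k)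
  have hsa : ∀ᶠ k in Filter.atTop, (aseq k).support ⊆ Gs :=
    haev.mono fun k hk => support_of_sq hG (hacs k) (hcssupp k) hk.2.1 hk.1
  have hsign : ∀ᶠ k in Filter.atTop, ((aseq k).coeff 0).im = 0 ∧ 0 ≤ ((aseq k).coeff 0).re := by
    refine haev.mono fun k hk => ?_
    have hskpos : PosC (s k) := (hs k).resolve_left (hsne k)
    refine ⟨hskpos.1 0, ?_⟩
    have h2 := hskpos.2.2
    have hlam : lam (s k) = (0:ℚ) := hk.2.2
    rw [hlam] at h2
    exact le_of_lt h2
  have hconvA : ∀ q, Filter.Tendsto (fun k => (aseq k).coeff q) Filter.atTop (nhds (A.coeff q)) :=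
    sqrt_tendsto hG hsa hAsupp (Filter.Eventually.of_forall hacs) hACeq hsign hAsign hA0ne hcconv
  -- the inverses
  have hstH : ∀ k, aseq k * b k = 1 := by
    intro k
    calc aseq k * b k = ((s k * t k : LeviCivitaField ℂ) : HahnSeries ℚ ℂ) := rfl
      _ = 1 := by rw [hst k]; rfl
  have hSTH : A * B = 1 := by
    calc A * B = ((S * T : LeviCivitaField ℂ) : HahnSeries ℚ ℂ) := rfl
      _ = 1 := by rw [hST]; rfl
  have hsb : ∀ᶠ k in Filter.atTop, (b k).support ⊆ Gs := by
    filter_upwards [hsa, haev] with k h1 h2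
    exact support_of_mul_eq hG (hstH k) h1 (supp_one_subset hG) h2.2.1
  have hBsupp : B.support ⊆ Gs :=
    support_of_mul_eq hG hSTH hAsupp (supp_one_subset hG) hA0ne
  have hconvB : ∀ q, Filter.Tendsto (fun k => (b k).coeff q) Filter.atTop (nhds (B.coeff q)) :=
    div_tendsto hG hsa hsb hAsupp hBsupp (Filter.Eventually.of_forall hstH) hSTH hconvA
  -- the epsilon argument
  intro ρ hρ
  obtain ⟨q₀, hq₀⟩ := exists_rat_gt (1 / ρ)
  set F : Finset ℚ := (hG.fin q₀).toFinset with hFdef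
  have hsmall : ∀ p : ℚ, ∀ᶠ k in Filter.atTop, ‖(b k).coeff p - B.coeff p‖ < ρ/2 := by
    intro p
    have h0 : Filter.Tendsto (fun k => (b k).coeff p - B.coeff p) Filter.atTop (nhds 0) := by
      have := (hconvB p).sub (tendsto_const_nhds (x := B.coeff p))
      rwa [sub_self] at this
    have hnorm := h0.norm
    rw [norm_zero] at hnorm
    exact hnorm.eventually_lt_const (by linarith)
  have hall : ∀ᶠ k in Filter.atTop, (∀ p ∈ F, ‖(b k).coeff p - B.coeff p‖ < ρ/2)
      ∧ (b k).support ⊆ Gs := ((Finset.eventually_all F).2 fun p _ => hsmall p).and hsb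
  obtain ⟨N, hN⟩ := Filter.eventually_atTop.1 hall
  refine ⟨N, fun k hk => ?_⟩
  obtain ⟨hk1, hk2⟩ := hN k (le_of_lt hk)
  have hcoeffsub : ∀ q : ℚ, coeff (t k - T) q = (b k).coeff q - B.coeff q := fun q => rfl
  have hle : wnorm (t k - T) (1/ρ) ≤ ρ/2 := by
    apply Real.sSup_le _ (by linarith)
    rintro y ⟨q, ⟨hq1, hq2⟩, rfl⟩
    have hqsupp : q ∈ (b k - B).support := by
      rw [HahnSeries.mem_support, HahnSeries.coeff_sub]
      rw [hcoeffsub q] at hq2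
      exact hq2
    have hqG : q ∈ Gs := supp_sub_subset hk2 hBsupp hqsupp
    have hqF : q ∈ F := by
      rw [hFdef, Set.Finite.mem_toFinset]
      refine ⟨hqG, ?_⟩
      have : (q:ℝ) < (q₀:ℝ) := lt_of_le_of_lt hq1 hq₀
      exact_mod_cast this
    calc ‖coeff (t k - T) q‖ = ‖(b k).coeff q - B.coeff q‖ := by rw [hcoeffsub q]
      _ ≤ ρ/2 := le_of_lt (hk1 q hqF)
  linarith
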